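/- arXiv:1510.06903 — 4 statements merged into one kernel-verified Lean document; each statement's English description precedes it below -/
import Mathlib

section
/- For a linear code C over F_q with covering radius ρ and external distance s (the number of distinct nonzero weights of codewords in the dual code), one has ρ ≤ s. -/
/-!
Delsarte's argument. Fix a primitive additive character `ψ` of `F` and a polynomial `P` with
`P(0) ≠ 0` vanishing at every nonzero weight of `C^⊥`, e.g. `∏ w, (X - w)`, of degree `s`.
For a vector `v`, sum `P(wt u) ψ(u ⬝ (c - v))` over all `u` and all `c ∈ C`. Summing over `c`
first kills every `u ∉ C^⊥`, and `P` kills every nonzero `u ∈ C^⊥`, leaving `P(0) |C| ≠ 0`.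
Summing over `u` first, the transform of `u ↦ wt(u)^k` vanishes at every `x` with `k < wt x`:
`wt(u)^k` is a sum of products of at most `k` coordinate indicators, and each such product is
independent of some coordinate in the support of `x`. Hence `wt(c - v) ≤ s` for some `c ∈ C`.
-/

open Finset Polynomial

theorem Fintype.sum_eq_zero_of_add_eq_mul {G R : Type*} [AddGroup G] [Fintype G] [CommRing R]
    [IsDomain R] (f : G → R) (t : G) {ζ : R} (hζ : ζ ≠ 1) (hf : ∀ u, f (u + t) = f u * ζ) :
    ∑ u, f u = 0 := by
  refine eq_zero_of_mul_eq_self_right hζ ?_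
  rw [Finset.sum_mul]
  simp_rw [← hf]
  exact Fintype.sum_equiv (Equiv.addRight t) _ _ fun _ => rfl

theorem AddChar.IsPrimitive.exists_apply_mul_ne_one {F R : Type*} [CommRing F] [CommMonoid R]
    {ψ : AddChar F R} (hψ : ψ.IsPrimitive) {a : F} (ha : a ≠ 0) : ∃ b, ψ (a * b) ≠ 1 := by
  simpa using AddChar.ne_one_iff.mp (hψ ha)

section

variable {ι F R : Type*} [Fintype ι] [CommRing F] [CommRing R] [IsDomain R] {ψ : AddChar F R}

theorem sum_addChar_dotProduct_sub_eq_zero (hψ : ψ.IsPrimitive) (C : Submodule F (ι → F))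
    [Fintype C] {u : ι → F} (hu : ∃ c ∈ C, u ⬝ᵥ c ≠ 0) (v : ι → F) :
    ∑ c : C, ψ (u ⬝ᵥ (c - v)) = 0 := by
  obtain ⟨c₀, hc₀, hu⟩ := hu
  obtain ⟨b, hb⟩ := hψ.exists_apply_mul_ne_one hu
  refine Fintype.sum_eq_zero_of_add_eq_mul _ ⟨b • c₀, C.smul_mem b hc₀⟩ hb fun c => ?_
  rw [← AddChar.map_add_eq_mul, Submodule.coe_add, Submodule.coe_mk]
  congr 1
  rw [add_sub_right_comm, dotProduct_add, dotProduct_smul, smul_eq_mul, mul_comm]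

variable [DecidableEq ι] [Fintype F]

theorem sum_mul_addChar_dotProduct_eq_zero (hψ : ψ.IsPrimitive) {x : ι → F} {i : ι}
    (hx : x i ≠ 0) (g : (ι → F) → R) (hg : ∀ u a, g (u + Pi.single i a) = g u) :
    ∑ u, g u * ψ (u ⬝ᵥ x) = 0 := by
  obtain ⟨a, ha⟩ := hψ.exists_apply_mul_ne_one hx
  refine Fintype.sum_eq_zero_of_add_eq_mul _ (Pi.single i a) ha fun u => ?_
  rw [hg, add_dotProduct, single_dotProduct, AddChar.map_add_eq_mul, mul_comm a, mul_assoc]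

variable [DecidableEq F]

theorem sum_hammingNorm_pow_mul_addChar_eq_zero (hψ : ψ.IsPrimitive) {x : ι → F} {k : ℕ}
    (hk : k < hammingNorm x) : ∑ u, (hammingNorm u : R) ^ k * ψ (u ⬝ᵥ x) = 0 := by
  simp_rw [hammingNorm, natCast_card_filter, Fintype.sum_pow, Finset.sum_mul]
  rw [Finset.sum_comm]
  refine Finset.sum_eq_zero fun p _ => ?_
  obtain ⟨i, hi, hip⟩ : ∃ i ∈ ({i | x i ≠ 0} : Finset ι), i ∉ univ.image p :=
    exists_mem_notMem_of_card_lt_card ((card_image_le.trans_eq (card_fin k)).trans_lt hk)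
  refine sum_mul_addChar_dotProduct_eq_zero hψ (mem_filter.mp hi).2 _ fun u a => ?_
  refine Finset.prod_congr rfl fun j _ => ?_
  have hij : p j ≠ i := fun h => hip (h ▸ mem_image_of_mem p (mem_univ j))
  rw [Pi.add_apply, Pi.single_eq_of_ne hij, add_zero]

theorem sum_eval_hammingNorm_mul_addChar_eq_zero (hψ : ψ.IsPrimitive) {x : ι → F} (P : R[X])
    (hP : P.natDegree < hammingNorm x) : ∑ u, P.eval (hammingNorm u : R) * ψ (u ⬝ᵥ x) = 0 := by
  simp_rw [eval_eq_sum_range, Finset.sum_mul, mul_assoc]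
  rw [Finset.sum_comm]
  refine Finset.sum_eq_zero fun k hk => ?_
  rw [← Finset.mul_sum, sum_hammingNorm_pow_mul_addChar_eq_zero hψ, mul_zero]
  exact (Nat.lt_succ_iff.mp (mem_range.mp hk)).trans_lt hP

theorem exists_hammingDist_le_natDegree [CharZero R]
    (hψ : ψ.IsPrimitive) (C : Submodule F (ι → F)) (P : R[X]) (hP₀ : P.eval 0 ≠ 0)
    (hP : ∀ x ≠ 0, (∀ c ∈ C, x ⬝ᵥ c = 0) → P.eval (hammingNorm x : R) = 0) (v : ι → F) :
    ∃ c ∈ C, hammingDist v c ≤ P.natDegree := by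
  by_contra! hfar
  have : Fintype C := Fintype.ofFinite C
  have hfourier : ∑ c : C, ∑ u, P.eval (hammingNorm u : R) * ψ (u ⬝ᵥ ((c : ι → F) - v)) = 0 :=
    Finset.sum_eq_zero fun c _ => sum_eval_hammingNorm_mul_addChar_eq_zero hψ P
      (by simpa [hammingDist_eq_hammingNorm, neg_add_eq_sub] using hfar c c.2)
  rw [Finset.sum_comm, Finset.sum_eq_single (0 : ι → F)] at hfourier
  · simp only [hammingNorm_zero, zero_dotProduct, AddChar.map_zero_eq_one, mul_one,
      Finset.sum_const, card_univ, nsmul_eq_mul, Nat.cast_zero] at hfourier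
    exact mul_ne_zero (Nat.cast_ne_zero.mpr Fintype.card_ne_zero) hP₀ hfourier
  · intro u _ hu
    by_cases hdual : ∀ c ∈ C, u ⬝ᵥ c = 0
    · simp [hP u hu hdual]
    · push Not at hdual
      rw [← Finset.mul_sum, sum_addChar_dotProduct_sub_eq_zero hψ C hdual, mul_zero]
  · exact fun h => (h (mem_univ _)).elim

end

theorem exists_addChar_isPrimitive (F : Type*) [Field F] [Finite F] :
    ∃ ψ : AddChar F ℂ, ψ.IsPrimitive := by
  obtain ⟨ψ, hψ⟩ := AddChar.exists_apply_ne_zero.mpr (one_ne_zero (α := F))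
  exact ⟨ψ, .of_ne_one fun h => hψ (h ▸ AddChar.one_apply 1)⟩

theorem exists_hammingDist_le_card {ι F : Type*} [Fintype ι] [DecidableEq ι] [Field F] [Fintype F]
    [DecidableEq F] (C : Submodule F (ι → F)) (W : Finset ℕ) (hW₀ : 0 ∉ W)
    (hW : ∀ x ≠ 0, (∀ c ∈ C, x ⬝ᵥ c = 0) → hammingNorm x ∈ W) (v : ι → F) :
    ∃ c ∈ C, hammingDist v c ≤ W.card := by
  obtain ⟨ψ, hψ⟩ := exists_addChar_isPrimitive F
  have hP := exists_hammingDist_le_natDegree hψ C (∏ w ∈ W, (X - Polynomial.C (w : ℂ)))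
    (by simpa [eval_prod, prod_ne_zero_iff, sub_eq_zero] using fun w hw (h : w = 0) => hW₀ (h ▸ hw))
    (fun x hx hdual => by simpa [eval_prod, prod_eq_zero_iff, sub_eq_zero] using hW x hx hdual) v
  rwa [natDegree_finsetProd_X_sub_C_eq_card] at hP

theorem covering_radius_le_external_distance_general
    {n : ℕ} (F : Type) [Field F] [Fintype F] [DecidableEq F]
    (C : Submodule F (Fin n → F)) (ρ : ℕ)
    (hρ₂ : ∃ x : Fin n → F, ∀ c ∈ C, ρ ≤ hammingDist x c) :
    ρ ≤ {w : ℕ | w ≠ 0 ∧ ∃ x : Fin n → F,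
          (∀ c ∈ C, ∑ i, x i * c i = 0) ∧ hammingNorm x = w}.ncard := by
  obtain ⟨v, hv⟩ := hρ₂
  set S := {w : ℕ | w ≠ 0 ∧ ∃ x : Fin n → F, (∀ c ∈ C, ∑ i, x i * c i = 0) ∧ hammingNorm x = w}
  have hS : S.Finite := (Set.finite_Iic n).subset fun _ ⟨_, x, _, hx⟩ =>
    hx ▸ (hammingNorm_le_card_fintype (x := x)).trans_eq (Fintype.card_fin n)
  obtain ⟨c, hc, hdist⟩ := exists_hammingDist_le_card C hS.toFinset (by simp [S])
    (fun x hx hdual => hS.mem_toFinset.mpr ⟨hammingNorm_ne_zero_iff.mpr hx, x, hdual, rfl⟩) v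
  rw [Set.ncard_eq_toFinset_card S hS]
  exact (hv c hc).trans hdist

/-- For a linear code C over F_q with covering radius ρ and external
distance s (number of distinct nonzero weights in the dual code), ρ ≤ s. -/
theorem covering_radius_le_external_distance
    {q n : ℕ} (F : Type) [Field F] [Fintype F] [DecidableEq F]
    (hq : Fintype.card F = q)
    (C : Submodule F (Fin n → F)) (ρ : ℕ)
    (hρ₁ : ∀ x : Fin n → F, ∃ c ∈ C, hammingDist x c ≤ ρ)
    (hρ₂ : ∃ x : Fin n → F, ∀ c ∈ C, ρ ≤ hammingDist x c) :
    ρ ≤ {w : ℕ | w ≠ 0 ∧ ∃ x : Fin n → F,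
          (∀ c ∈ C, ∑ i, x i * c i = 0) ∧ hammingNorm x = w}.ncard :=
  covering_radius_le_external_distance_general F C ρ hρ₂
end

section
/- Let H be a parity check matrix of the q-ary Hamming code of length n = (q^m−1)/(q−1) (so the columns of H are representatives of all 1-dimensional subspaces of F_q^m). Then the lifted code C_r = {v ∈ (F_{q^r})^n : H v^T = 0} over F_{q^r} has covering radius min{m, r}. -/
open Matrix

/-- H is a parity check matrix of a Hamming code: its columns are nonzero, pairwise
non-proportional, and represent all 1-dimensional subspaces of F^m. -/
def IsHammingPCM {F : Type*} [Field F] {m n : ℕ} (H : Matrix (Fin m) (Fin n) F) : Prop :=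
  (∀ j, (fun i => H i j) ≠ (0 : Fin m → F)) ∧
  (∀ j j' : Fin n, j ≠ j' → ∀ c : F, (fun i => H i j) ≠ c • (fun i => H i j')) ∧
  (∀ x : Fin m → F, x ≠ 0 → ∃ (j : Fin n) (c : F), x = c • (fun i => H i j))

/-! For a syndrome `s ∈ L^m`, the least weight of an `e` with `H e = s` is the dimension over
`K` of the span of the entries of `s`. If `e` is supported on `S`, every entry
`s i = ∑_{j ∈ S} H i j • e j` lies in the `K`-span of the `e j`, `j ∈ S`. Conversely, expanding
the entries of `s` in a `K`-basis `w` of that span gives `s = ∑ t, c t • w t` with `c t ∈ K^m`,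
and each `c t` is a multiple of a single column of `H`. That dimension is at most `min m r` and
this bound is attained; the covering radius is the largest weight needed to realise a syndrome. -/

open Module Submodule

section Hamming

variable {κ M : Type*} [Fintype κ] [AddCommMonoid M] [DecidableEq M]

theorem hammingNorm_add_le (x y : κ → M) :
    hammingNorm (x + y) ≤ hammingNorm x + hammingNorm y := by
  classical
  refine (Finset.card_le_card fun i hi => ?_).trans (Finset.card_union_le _ _)
  simp only [Finset.mem_union, Finset.mem_filter, Finset.mem_univ, true_and] at hi ⊢
  by_contra! h
  exact hi (by rw [Pi.add_apply, h.1, h.2, add_zero])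

theorem hammingNorm_sum_le {ι : Type*} (s : Finset ι) (f : ι → κ → M) :
    hammingNorm (∑ t ∈ s, f t) ≤ ∑ t ∈ s, hammingNorm (f t) := by
  classical
  induction s using Finset.induction_on with
  | empty => simp
  | insert t s ht ih =>
    rw [Finset.sum_insert ht, Finset.sum_insert ht]
    exact (hammingNorm_add_le _ _).trans (Nat.add_le_add_left ih _)

end Hamming

theorem finrank_eq_of_card_eq_pow {K V : Type*} [DivisionRing K] [Fintype K] [AddCommGroup V]
    [Module K V] [Fintype V] {r : ℕ} (h : Fintype.card V = Fintype.card K ^ r) : finrank K V = r :=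
  Nat.pow_right_injective Fintype.one_lt_card ((card_eq_pow_finrank (K := K)).symm.trans h)

section AlgebraMap

variable {K L : Type*} [CommSemiring K] [Semiring L] [Algebra K L]

theorem Matrix.map_algebraMap_mulVec_apply {ι κ : Type*} [Fintype κ] (H : Matrix ι κ K)
    (e : κ → L) (i : ι) : (H.map (algebraMap K L) *ᵥ e) i = ∑ j, H i j • e j := by
  simp only [mulVec, dotProduct, map_apply, Algebra.smul_def]

theorem Matrix.map_algebraMap_mulVec_smul {ι κ : Type*} [Fintype κ] (H : Matrix ι κ K)
    (u : κ → K) (w : L) :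
    H.map (algebraMap K L) *ᵥ (fun j => u j • w) = fun i => (H *ᵥ u) i • w := by
  ext i
  rw [map_algebraMap_mulVec_apply]
  simp only [mulVec, dotProduct, Finset.sum_smul, smul_smul]

end AlgebraMap

theorem Matrix.finrank_range_map_mulVec_le_hammingNorm {K L ι κ : Type*} [Field K] [Semiring L]
    [Algebra K L] [Fintype κ] [DecidableEq L] (H : Matrix ι κ K) (e : κ → L) :
    (Set.range (H.map (algebraMap K L) *ᵥ e)).finrank K ≤ hammingNorm e := by
  set S : Finset κ := {j | e j ≠ 0}
  have hrange : Set.range (H.map (algebraMap K L) *ᵥ e) ⊆ span K (S.image e : Set L) := by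
    rintro _ ⟨i, rfl⟩
    rw [map_algebraMap_mulVec_apply,
      ← Finset.sum_filter_of_ne fun j _ hj => right_ne_zero_of_smul hj]
    exact sum_mem fun j hj => smul_mem _ _ (subset_span (Finset.mem_image_of_mem e hj))
  calc (Set.range (H.map (algebraMap K L) *ᵥ e)).finrank K
      ≤ (S.image e : Set L).finrank K := Submodule.finrank_mono (span_le.2 hrange)
    _ ≤ (S.image e).card := finrank_span_finset_le_card _
    _ ≤ hammingNorm e := Finset.card_image_le

namespace IsHammingPCM

variable {K : Type*} [Field K] {m n : ℕ} {H : Matrix (Fin m) (Fin n) K}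

theorem exists_mulVec_eq_hammingNorm_le_one [DecidableEq K] (hH : IsHammingPCM H)
    (c : Fin m → K) : ∃ u : Fin n → K, H *ᵥ u = c ∧ hammingNorm u ≤ 1 := by
  by_cases hc : c = 0
  · exact ⟨0, by rw [mulVec_zero, hc], by rw [hammingNorm_zero]; exact zero_le_one⟩
  obtain ⟨j, a, rfl⟩ := hH.2.2 c hc
  refine ⟨Pi.single j a, ?_, ?_⟩
  · ext i
    simp [mulVec_single, mul_comm]
  · refine Finset.card_le_one.2 fun j₁ hj₁ j₂ hj₂ => ?_
    simp only [Finset.mem_filter, Finset.mem_univ, true_and] at hj₁ hj₂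
    have hsupp : ∀ j', (Pi.single j a : Fin n → K) j' ≠ 0 → j' = j := fun j' h => by
      by_contra hne
      exact h (by rw [Pi.single_eq_of_ne hne])
    rw [hsupp j₁ hj₁, hsupp j₂ hj₂]

theorem exists_map_mulVec_eq_hammingNorm_le_finrank_range {L : Type*} [Ring L] [Algebra K L]
    [DecidableEq L] (hH : IsHammingPCM H) (s : Fin m → L) :
    ∃ e : Fin n → L,
      H.map (algebraMap K L) *ᵥ e = s ∧ hammingNorm e ≤ (Set.range s).finrank K := by
  classical
  set W := span K (Set.range s)
  have : FiniteDimensional K W := FiniteDimensional.span_of_finite K (Set.finite_range s)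
  let b := Module.finBasis K W
  let c : Fin (finrank K W) → Fin m → K := fun t i => b.repr ⟨s i, subset_span ⟨i, rfl⟩⟩ t
  have hs : s = ∑ t, fun i => c t i • (b t : L) := by
    ext i
    have := congrArg Subtype.val (b.sum_repr ⟨s i, subset_span ⟨i, rfl⟩⟩)
    simp only [coe_sum, coe_smul] at this
    rw [Finset.sum_apply]
    exact this.symm
  choose u hu hu_one using fun t => hH.exists_mulVec_eq_hammingNorm_le_one (c t)
  refine ⟨∑ t, fun j => u t j • (b t : L), ?_, ?_⟩
  · rw [mulVec_sum, hs]
    simp only [map_algebraMap_mulVec_smul, hu]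
  · calc hammingNorm (∑ t, fun j => u t j • (b t : L))
        ≤ ∑ t, hammingNorm (fun j => u t j • (b t : L)) := hammingNorm_sum_le _ _
      _ ≤ ∑ _t, 1 := Finset.sum_le_sum fun t _ =>
          (hammingNorm_comp_le_hammingNorm (fun _ a => a • (b t : L)) fun _ => zero_smul _ _).trans
          (hu_one t)
      _ = finrank K W := by simp

end IsHammingPCM

theorem exists_min_le_finrank_range (K L : Type*) [Field K] [AddCommGroup L] [Module K L]
    [Module.Finite K L] (m : ℕ) :
    ∃ s : Fin m → L, min m (finrank K L) ≤ (Set.range s).finrank K := by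
  let b := Module.finBasis K L
  let f : Fin (min m (finrank K L)) → Fin m := Fin.castLE (min_le_left _ _)
  let v : Fin (min m (finrank K L)) → L := b ∘ Fin.castLE (min_le_right _ _)
  have hf : Function.Injective f := Fin.castLE_injective _
  refine ⟨Function.extend f v 0, ?_⟩
  have hv : Set.range v ⊆ Set.range (Function.extend f v 0) := by
    rintro _ ⟨p, rfl⟩
    exact ⟨f p, hf.extend_apply v 0 p⟩
  calc min m (finrank K L) = (Set.range v).finrank K := by
        rw [Set.finrank, finrank_span_eq_card (b.linearIndependent.comp _ (Fin.castLE_injective _)),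
          Fintype.card_fin]
    _ ≤ _ := Submodule.finrank_mono (span_mono hv)

theorem lifted_hamming_covering_radius_general
    {q m r n : ℕ} (K L : Type) [Field K] [Fintype K]
    [Field L] [Fintype L] [DecidableEq L] [Algebra K L]
    (hq : Fintype.card K = q) (hL : Fintype.card L = q ^ r)
    (H : Matrix (Fin m) (Fin n) K) (hH : IsHammingPCM H) :
    (∀ x : Fin n → L, ∃ c : Fin n → L,
        (H.map (algebraMap K L)).mulVec c = 0 ∧ hammingDist x c ≤ min m r) ∧
      (∃ x : Fin n → L, ∀ c : Fin n → L,
        (H.map (algebraMap K L)).mulVec c = 0 → min m r ≤ hammingDist x c) := by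
  have hr : finrank K L = r := finrank_eq_of_card_eq_pow (hq ▸ hL)
  have finrank_range_le (s : Fin m → L) : (Set.range s).finrank K ≤ min m r :=
    le_min ((finrank_range_le_card s).trans_eq (Fintype.card_fin m)) (hr ▸ finrank_le _)
  constructor
  · intro x
    obtain ⟨e, he, he_norm⟩ :=
      hH.exists_map_mulVec_eq_hammingNorm_le_finrank_range (H.map (algebraMap K L) *ᵥ x)
    refine ⟨x - e, by rw [mulVec_sub, he, sub_self], ?_⟩
    rw [hammingDist_comm, hammingDist_eq_hammingNorm, neg_sub, sub_add_cancel]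
    exact he_norm.trans (finrank_range_le _)
  · obtain ⟨s, hs⟩ := exists_min_le_finrank_range K L m
    obtain ⟨x, hx, -⟩ := hH.exists_map_mulVec_eq_hammingNorm_le_finrank_range s
    refine ⟨x, fun c hc => ?_⟩
    have hxc : H.map (algebraMap K L) *ᵥ (x - c) = s := by rw [mulVec_sub, hx, hc, sub_zero]
    calc min m r = min m (finrank K L) := by rw [hr]
      _ ≤ (Set.range s).finrank K := hs
      _ ≤ hammingNorm (x - c) := hxc ▸ finrank_range_map_mulVec_le_hammingNorm H (x - c)
      _ = hammingDist x c := by rw [hammingDist_comm, hammingDist_eq_hammingNorm, neg_add_eq_sub]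

/-- The code obtained by lifting the q-ary Hamming code of length
(q^m−1)/(q−1) to F_{q^r} has covering radius min{m, r}. -/
theorem lifted_hamming_covering_radius
    {q m r n : ℕ} (K L : Type) [Field K] [Fintype K] [DecidableEq K]
    [Field L] [Fintype L] [DecidableEq L] [Algebra K L]
    (hq : Fintype.card K = q) (hL : Fintype.card L = q ^ r)
    (hm : 2 ≤ m) (hr : 1 ≤ r) (hn : n * (q - 1) = q ^ m - 1)
    (H : Matrix (Fin m) (Fin n) K) (hH : IsHammingPCM H) :
    (∀ x : Fin n → L, ∃ c : Fin n → L,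
        (H.map (algebraMap K L)).mulVec c = 0 ∧ hammingDist x c ≤ min m r) ∧
      (∃ x : Fin n → L, ∀ c : Fin n → L,
        (H.map (algebraMap K L)).mulVec c = 0 → min m r ≤ hammingDist x c) :=
  lifted_hamming_covering_radius_general K L hq hL H hH
end

section
/- Let A be m_a × n_a and B be m_b × n_b matrices over a field F, with C_A = ker of A and C_B = ker of B (as row-vector codes). Then every n_b × n_a matrix all of whose rows lie in C_A corresponds to a codeword of C = {c : (A⊗B)c^T = 0}, and every n_b × n_a matrix all of whose columns lie in C_B corresponds to a codeword of C; moreover every codeword of C is a linear combination of matrices of these two types. -/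
open Matrix

lemma row_iff {F : Type} [Field F] {ma na nb : ℕ}
    (A : Matrix (Fin ma) (Fin na) F) (M : Matrix (Fin nb) (Fin na) F) :
    (∀ i : Fin nb, A.mulVec (fun j => M i j) = 0) ↔ M * Aᵀ = 0 := by
  constructor
  · intro h; ext i l
    have := congrFun (h i) l
    simpa [mulVec, dotProduct, mul_apply, mul_comm] using this
  · intro h i; funext l
    have := congrFun (congrFun h i) l
    simpa [mulVec, dotProduct, mul_apply, mul_comm] using this

lemma col_iff {F : Type} [Field F] {mb na nb : ℕ}
    (B : Matrix (Fin mb) (Fin nb) F) (M : Matrix (Fin nb) (Fin na) F) :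
    (∀ j : Fin na, B.mulVec (fun i => M i j) = 0) ↔ B * M = 0 := by
  constructor
  · intro h; ext k j
    have := congrFun (h j) k
    simpa [mulVec, dotProduct, mul_apply] using this
  · intro h j; funext k
    have := congrFun (congrFun h k) j
    simpa [mulVec, dotProduct, mul_apply] using this

lemma exists_ginv {F : Type} [Field F] {ma na : ℕ}
    (A : Matrix (Fin ma) (Fin na) F) : ∃ R : Matrix (Fin na) (Fin ma) F, A * R * A = A := by
  set f : (Fin na → F) →ₗ[F] (Fin ma → F) := Matrix.toLin' A with hf
  obtain ⟨q, hq⟩ := Submodule.exists_isCompl (LinearMap.range f)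
  obtain ⟨s, hs⟩ := f.rangeRestrict.exists_rightInverse_of_surjective
    (by rw [LinearMap.range_rangeRestrict])
  set pr := Submodule.linearProjOfIsCompl _ q hq
  refine ⟨LinearMap.toMatrix' (s ∘ₗ pr), ?_⟩
  apply (Matrix.toLin' (R := F) (m := Fin ma) (n := Fin na)).injective
  rw [Matrix.toLin'_mul, Matrix.toLin'_mul, Matrix.toLin'_toMatrix']
  refine LinearMap.ext fun x => ?_
  have h1 : pr (f x) = ⟨f x, LinearMap.mem_range_self f x⟩ :=
    Submodule.linearProjOfIsCompl_apply_left hq ⟨f x, LinearMap.mem_range_self f x⟩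
  have h2 : f (s ⟨f x, LinearMap.mem_range_self f x⟩) = f x := by
    have h3 := congrFun (congrArg DFunLike.coe hs) ⟨f x, LinearMap.mem_range_self f x⟩
    have := congrArg Subtype.val h3
    simpa [LinearMap.rangeRestrict] using this
  simp only [LinearMap.comp_apply, ← hf, h1, h2]

/-- Matrices whose rows are codewords of C_A, and matrices whose columns
are codewords of C_B, are codewords of the Kronecker-product code C (in matrix form
B M Aᵀ = 0), and every codeword of C is a linear combination of such matrices. -/
theorem kronecker_code_rows_columns_span
    (F : Type) [Field F] {ma na mb nb : ℕ}
    (A : Matrix (Fin ma) (Fin na) F) (B : Matrix (Fin mb) (Fin nb) F) :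
    (∀ M : Matrix (Fin nb) (Fin na) F,
        (∀ i : Fin nb, A.mulVec (fun j => M i j) = 0) → B * M * Aᵀ = 0) ∧
    (∀ M : Matrix (Fin nb) (Fin na) F,
        (∀ j : Fin na, B.mulVec (fun i => M i j) = 0) → B * M * Aᵀ = 0) ∧
    (∀ M : Matrix (Fin nb) (Fin na) F, B * M * Aᵀ = 0 →
        M ∈ Submodule.span F
          ({M' : Matrix (Fin nb) (Fin na) F | ∀ i : Fin nb, A.mulVec (fun j => M' i j) = 0} ∪
           {M' : Matrix (Fin nb) (Fin na) F | ∀ j : Fin na, B.mulVec (fun i => M' i j) = 0})) := by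
  refine ⟨?_, ?_, ?_⟩
  · intro M h
    rw [Matrix.mul_assoc, (row_iff A M).1 h, Matrix.mul_zero]
  · intro M h
    rw [(col_iff B M).1 h, Matrix.zero_mul]
  · intro M hM
    obtain ⟨R, hR⟩ := exists_ginv A
    have hsplit : M = M * (1 - R * A)ᵀ + M * (R * A)ᵀ := by
      rw [transpose_sub, transpose_one, Matrix.mul_sub, Matrix.mul_one, sub_add_cancel]
    rw [hsplit]
    refine add_mem (Submodule.subset_span (Or.inl ?_)) (Submodule.subset_span (Or.inr ?_))
    · refine (row_iff A _).2 ?_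
      have h1 : M * (1 - R * A)ᵀ * Aᵀ = M * (A * (1 - R * A))ᵀ := by
        rw [Matrix.mul_assoc, ← transpose_mul]
      have h2 : A * (1 - R * A) = 0 := by
        rw [Matrix.mul_sub, Matrix.mul_one, ← Matrix.mul_assoc, hR, sub_self]
      rw [h1, h2, transpose_zero, Matrix.mul_zero]
    · refine (col_iff B _).2 ?_
      simp only [transpose_mul, ← Matrix.mul_assoc]
      rw [hM, Matrix.zero_mul]
end

section
/- Let A be a parity check matrix of the Hamming code of length n_a = (q^{um}−1)/(q^u−1) over F_{q^u}, and R = [I_{n_b−1} | −1^T] the parity check matrix of the q-ary repetition code of length n_b, where 4 ≤ n_b ≤ (q^u−1)n_a + 1. Then the code over F_{q^u} with parity check matrix A ⊗ R has covering radius n_b − 1. -/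
/-!
Viewed as an `na × nb` array, a word lies in the code of `A ⊗ R` exactly when all its columns
have the same `A`-syndrome. The Hamming code has covering radius one, so any array becomes a
codeword after changing at most one entry in every column but one, the syndrome of that column
being taken as the common one. Conversely, `nb ≤ q ^ (u m) = (q ^ u - 1) na + 1` leaves room for
an array whose columns have pairwise distinct syndromes; a codeword can agree with at most one of
those columns, so it differs from the array in at least `nb - 1` positions.
-/

open Matrix Kronecker

/-- The parity check matrix [I_{n-1} | −1ᵀ] of the repetition code of length n. -/
def repPCM (F : Type*) [Field F] (n : ℕ) : Matrix (Fin (n - 1)) (Fin n) F :=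
  Matrix.of fun i j => if (j : ℕ) = (i : ℕ) then 1 else if (j : ℕ) = n - 1 then -1 else 0

theorem repPCM_map {K L : Type*} [Field K] [Field L] [Algebra K L] (n : ℕ) :
    (repPCM K n).map (algebraMap K L) = repPCM L n := by
  ext k l
  simp only [repPCM, map_apply, of_apply]
  split_ifs <;> simp

theorem repPCM_mul_row {F ι : Type*} [Field F] {n : ℕ} (S : Matrix (Fin n) ι F)
    (k : Fin (n - 1)) :
    (repPCM F n * S) k = S (k.castLE (n.sub_le 1)) - S ⟨n - 1, by have := k.isLt; omega⟩ := by
  have hk := k.isLt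
  ext i
  rw [mul_apply_eq_vecMul, vecMul, dotProduct,
    Fintype.sum_eq_add (k.castLE (n.sub_le 1)) ⟨n - 1, by omega⟩]
  · simp [repPCM, sub_eq_add_neg, show n - 1 ≠ k by omega]
  · exact Fin.ne_of_val_ne (by simpa using hk.ne)
  · rintro l ⟨hlk, hll⟩
    simp_all [repPCM, Fin.ext_iff]

theorem repPCM_mul_eq_zero_iff {F ι : Type*} [Field F] {n : ℕ} (S : Matrix (Fin n) ι F) :
    repPCM F n * S = 0 ↔ ∀ l l', S l = S l' := by
  refine ⟨fun h l l' => ?_, fun h => funext fun k => ?_⟩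
  · have hn := l.isLt
    suffices hlast : ∀ l'' : Fin n, S l'' = S ⟨n - 1, by omega⟩ by rw [hlast l, hlast l']
    intro l''
    by_cases hl : (l'' : ℕ) = n - 1
    · exact congr_arg S (Fin.ext hl)
    · have hk : (l'' : ℕ) < n - 1 := by omega
      exact sub_eq_zero.1 ((repPCM_mul_row S ⟨l'', hk⟩).symm.trans (congr_fun h _))
  · exact (repPCM_mul_row S k).trans (sub_eq_zero.2 (h _ _))

theorem kronecker_repPCM_mulVec_eq_zero_iff {K L ι κ : Type*} [Field K] [Field L] [Algebra K L]
    [Fintype ι] {n : ℕ} (A : Matrix κ ι L) (c : ι × Fin n → L) :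
    (A ⊗ₖ (repPCM K n).map (algebraMap K L)) *ᵥ c = 0 ↔
      ∀ l l', A *ᵥ (fun j => c (j, l)) = A *ᵥ (fun j => c (j, l')) := by
  have hc : c = vec (of fun l j => c (j, l)) := rfl
  rw [hc, kronecker_mulVec_vec, vec_eq_zero_iff, repPCM_map, Matrix.mul_assoc,
    repPCM_mul_eq_zero_iff]
  simp only [mul_apply_eq_vecMul, vecMul_transpose]
  rfl

theorem hammingDist_eq_sum_column {ι κ β : Type*} [Fintype ι] [Fintype κ] [DecidableEq β]
    (x y : ι × κ → β) :
    hammingDist x y = ∑ l, hammingDist (fun j => x (j, l)) (fun j => y (j, l)) := by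
  simp only [hammingDist, Finset.card_filter, Fintype.sum_prod_type_right]

theorem hammingNorm_single_le_one {ι β : Type*} [Fintype ι] [DecidableEq ι] [Zero β]
    [DecidableEq β] (j : ι) (a : β) : hammingNorm (Pi.single j a : ι → β) ≤ 1 := by
  refine (Finset.card_le_card fun i hi => ?_).trans (Finset.card_singleton j).le
  by_contra hij
  simp_all [Pi.single_apply]

namespace IsHammingPCM

variable {F : Type*} [Field F] {m n : ℕ} {H : Matrix (Fin m) (Fin n) F}

theorem exists_mulVec_eq_hammingDist_le_one [DecidableEq F] (hH : IsHammingPCM H)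
    (x : Fin n → F) (s : Fin m → F) : ∃ y, H *ᵥ y = s ∧ hammingDist x y ≤ 1 := by
  by_cases hs : s - H *ᵥ x = 0
  · exact ⟨x, (sub_eq_zero.1 hs).symm, by simp⟩
  obtain ⟨j, a, hja⟩ := hH.2.2 _ hs
  refine ⟨x + Pi.single j a, ?_, ?_⟩
  · rw [mulVec_add, mulVec_single, op_smul_eq_smul]
    exact eq_sub_iff_add_eq'.1 hja.symm
  · rw [hammingDist_eq_hammingNorm, neg_add_cancel_left]
    exact hammingNorm_single_le_one j a

theorem mulVec_surjective (hH : IsHammingPCM H) : Function.Surjective H.mulVec := by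
  classical
  exact fun s => (hH.exists_mulVec_eq_hammingDist_le_one 0 s).imp fun _ => And.left

theorem card_pow_eq [Fintype F] [DecidableEq F] (hH : IsHammingPCM H) :
    Fintype.card F ^ m = (Fintype.card F - 1) * n + 1 := by
  obtain ⟨hne, hindep, hspan⟩ := hH
  let f : Fˣ × Fin n → {v : Fin m → F // v ≠ 0} := fun p =>
    ⟨(p.1 : F) • fun i => H i p.2, smul_ne_zero p.1.ne_zero (hne p.2)⟩
  have hf : f.Bijective := by
    refine ⟨fun ⟨a, j⟩ ⟨b, j'⟩ hab => ?_, fun ⟨v, hv⟩ => ?_⟩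
    · have hab : (a : F) • (fun i => H i j) = (b : F) • fun i => H i j' :=
        congr_arg Subtype.val hab
      obtain rfl : j = j' := by
        by_contra hjj
        apply hindep j j' hjj ((a : F)⁻¹ * b)
        rw [mul_smul, ← hab, inv_smul_smul₀ a.ne_zero]
      exact Prod.ext (Units.ext (smul_left_injective F (hne j) hab)) rfl
    · obtain ⟨j, a, rfl⟩ := hspan v hv
      have ha : a ≠ 0 := by rintro rfl; exact hv (zero_smul _ _)
      exact ⟨(Units.mk0 a ha, j), rfl⟩
  have := Fintype.card_congr (Equiv.ofBijective f hf)
  rw [Fintype.card_prod, Fintype.card_units, Fintype.card_fin, Fintype.card_subtype_compl,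
    Fintype.card_fun, Fintype.card_fin, Fintype.card_subtype_eq] at this
  have : 0 < Fintype.card F ^ m := pow_pos Fintype.card_pos m
  omega

end IsHammingPCM

section KroneckerRepetition

open Finset

variable {K L : Type*} [Field K] [Field L] [Algebra K L] [DecidableEq L] {m na nb : ℕ}
  {A : Matrix (Fin m) (Fin na) L}

theorem IsHammingPCM.exists_kronecker_repPCM_codeword_hammingDist_le (hA : IsHammingPCM A)
    (x : Fin na × Fin nb → L) (l₀ : Fin nb) :
    ∃ c, (A ⊗ₖ (repPCM K nb).map (algebraMap K L)) *ᵥ c = 0 ∧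
      hammingDist x c ≤ nb - 1 := by
  choose y hy hxy using fun l =>
    hA.exists_mulVec_eq_hammingDist_le_one (fun j => x (j, l)) (A *ᵥ fun j => x (j, l₀))
  let c : Fin na × Fin nb → L := fun p => if p.2 = l₀ then x p else y p.2 p.1
  have hcol : ∀ l, A *ᵥ (fun j => c (j, l)) = A *ᵥ fun j => x (j, l₀) := by
    intro l
    by_cases hl : l = l₀
    · subst hl; simp [c]
    · simp [c, hl, hy]
  refine ⟨c, (kronecker_repPCM_mulVec_eq_zero_iff A c).2 fun l l' =>
    (hcol l).trans (hcol l').symm, ?_⟩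
  rw [hammingDist_eq_sum_column, ← add_sum_erase _ _ (mem_univ l₀)]
  calc _ ≤ 0 + ∑ l ∈ univ.erase l₀, 1 := by
        gcongr with l hl
        · simp [c]
        · simp [c, ne_of_mem_erase hl, hxy]
    _ = nb - 1 := by simp [card_erase_of_mem]

theorem IsHammingPCM.exists_hammingDist_kronecker_repPCM_codeword_ge [Fintype L]
    (hA : IsHammingPCM A) (hnb : nb ≤ Fintype.card L ^ m) :
    ∃ x : Fin na × Fin nb → L, ∀ c,
      (A ⊗ₖ (repPCM K nb).map (algebraMap K L)) *ᵥ c = 0 → nb - 1 ≤ hammingDist x c := by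
  obtain ⟨σ⟩ : Nonempty (Fin nb ↪ (Fin m → L)) :=
    Function.Embedding.nonempty_of_card_le (by simpa only [Fintype.card_fin, Fintype.card_fun])
  choose y hy using fun l => hA.mulVec_surjective (σ l)
  refine ⟨fun p => y p.2 p.1, fun c hc => ?_⟩
  rw [kronecker_repPCM_mulVec_eq_zero_iff] at hc
  have hmatch : #{l | σ l = A *ᵥ fun j => c (j, l)} ≤ 1 :=
    card_le_one.2 fun l hl l' hl' =>
      σ.injective (by rw [(mem_filter.1 hl).2, (mem_filter.1 hl').2, hc])
  calc nb - 1 ≤ #{l | ¬σ l = A *ᵥ fun j => c (j, l)} := by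
        have := card_filter_add_card_filter_not (s := univ) fun l => σ l = A *ᵥ fun j => c (j, l)
        rw [card_univ, Fintype.card_fin] at this
        omega
    _ ≤ ∑ l, hammingDist (y l) (fun j => c (j, l)) := by
        rw [card_eq_sum_ones, sum_filter]
        gcongr with l
        split_ifs with h
        · exact Nat.zero_le _
        · exact hammingDist_pos.2 fun hyc => h (by rw [← hyc, hy l])
    _ = hammingDist (fun p => y p.2 p.1) c :=
        (hammingDist_eq_sum_column (fun p => y p.2 p.1) c).symm

end KroneckerRepetition

theorem kronecker_repetition_covering_radius_general
    {q u m na nb : ℕ} (K L : Type) [Field K]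
    [Field L] [Fintype L] [DecidableEq L] [Algebra K L]
    (hL : Fintype.card L = q ^ u)
    (hnb₁ : 4 ≤ nb) (hnb₂ : nb ≤ (q ^ u - 1) * na + 1)
    (A : Matrix (Fin m) (Fin na) L) (hA : IsHammingPCM A) :
    (∀ x : Fin na × Fin nb → L, ∃ c : Fin na × Fin nb → L,
        (A ⊗ₖ (repPCM K nb).map (algebraMap K L)).mulVec c = 0 ∧
          hammingDist x c ≤ nb - 1) ∧
      (∃ x : Fin na × Fin nb → L, ∀ c : Fin na × Fin nb → L,
        (A ⊗ₖ (repPCM K nb).map (algebraMap K L)).mulVec c = 0 →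
          nb - 1 ≤ hammingDist x c) := by
  have hcard : nb ≤ Fintype.card L ^ m := by rw [hA.card_pow_eq, hL]; exact hnb₂
  exact ⟨fun x => hA.exists_kronecker_repPCM_codeword_hammingDist_le x ⟨0, by omega⟩,
    hA.exists_hammingDist_kronecker_repPCM_codeword_ge hcard⟩

/-- The code over F_{q^u} with parity check matrix A ⊗ R, where A is a
Hamming PCM over F_{q^u} and R the repetition-code PCM over F_q, with
4 ≤ n_b ≤ (q^u−1)n_a + 1, has covering radius n_b − 1. -/
theorem kronecker_repetition_covering_radius
    {q u m na nb : ℕ} (K L : Type) [Field K] [Fintype K] [DecidableEq K]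
    [Field L] [Fintype L] [DecidableEq L] [Algebra K L]
    (hq : Fintype.card K = q) (hL : Fintype.card L = q ^ u)
    (hu : 1 ≤ u) (hm : 2 ≤ m)
    (hnb₁ : 4 ≤ nb) (hnb₂ : nb ≤ (q ^ u - 1) * na + 1)
    (A : Matrix (Fin m) (Fin na) L) (hA : IsHammingPCM A) :
    (∀ x : Fin na × Fin nb → L, ∃ c : Fin na × Fin nb → L,
        (A ⊗ₖ (repPCM K nb).map (algebraMap K L)).mulVec c = 0 ∧
          hammingDist x c ≤ nb - 1) ∧
      (∃ x : Fin na × Fin nb → L, ∀ c : Fin na × Fin nb → L,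
        (A ⊗ₖ (repPCM K nb).map (algebraMap K L)).mulVec c = 0 →
          nb - 1 ≤ hammingDist x c) :=
  kronecker_repetition_covering_radius_general K L hL hnb₁ hnb₂ A hA
end
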